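/- Let N ∈ ℕ. For y ∈ (0,1) set ζ(y) := √(1−y) + i√y (a unit complex number) and define the (N+1)×(N+1) matrix Ψ₀(y), indexed by n, m ∈ {0,…,N}, by (Ψ₀(y))_{n,m} := C(N, N−m)^{−1} · Σ over pairs (p,q) with 0 ≤ p ≤ n, 0 ≤ q ≤ N−n and p+q = m of C(n,p) C(N−n,q) ζ(y)^{2(q−p+n)−N}, where negative powers of ζ(y) are taken via ζ(y)^{−1} = \overline{ζ(y)}. Let K be the (N+1)×(N+1) matrix with K_{i,j} := K_j(i), and let Υ(y) be the diagonal matrix with Υ(y)_{j,j} := (−i)^{j} C(N,j) (√y)^{j} (√(1−y))^{N−j}. Then Ψ₀(y) = K Υ(y) K for every y ∈ (0,1). -/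

import Mathlib

open Matrix Set Polynomial

/-- Krawtchouk polynomial `K_n(x)` with parameter `p = 1/2` and `N` trials:
`K_n(x) = Σ_{s=0}^{n} ((−n)_s (−x)_s / ((−N)_s s!)) 2^s`. -/
noncomputable def kraw (N n : ℕ) (x : ℂ) : ℂ :=
  ∑ s ∈ Finset.range (n + 1),
    ((ascPochhammer ℂ s).eval (-(n : ℂ)) * (ascPochhammer ℂ s).eval (-x)
        / ((ascPochhammer ℂ s).eval (-(N : ℂ)) * (Nat.factorial s : ℂ))) * 2 ^ s

/-- `ζ(y) = √(1−y) + i√y`, a unit complex number for `y ∈ (0,1)`. -/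
noncomputable def zeta (y : ℝ) : ℂ :=
  (Real.sqrt (1 - y) : ℂ) + Complex.I * (Real.sqrt y : ℂ)

/-- The full spherical function of degree zero `Ψ₀(y)` for
`(SU(2)×SU(2), diag SU(2))` with `ℓ = N/2`. -/
noncomputable def Psi0 (N : ℕ) (y : ℝ) : Matrix (Fin (N + 1)) (Fin (N + 1)) ℂ :=
  Matrix.of fun n m =>
    ((N.choose (N - (m : ℕ)) : ℂ))⁻¹ *
      ∑ p ∈ Finset.range ((n : ℕ) + 1), ∑ q ∈ Finset.range (N - (n : ℕ) + 1),
        if p + q = (m : ℕ) then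
          (((n : ℕ).choose p : ℂ)) * (((N - (n : ℕ)).choose q : ℂ))
            * zeta y ^ (2 * ((q : ℤ) - (p : ℤ) + ((n : ℕ) : ℤ)) - (N : ℤ))
        else 0

/-- The Krawtchouk matrix `K_{i,j} = K_j(i)`. -/
noncomputable def Kmat (N : ℕ) : Matrix (Fin (N + 1)) (Fin (N + 1)) ℂ :=
  Matrix.of fun i j => kraw N (j : ℕ) (((i : ℕ) : ℂ))

/-- The diagonal matrix `Υ(y)_{j,j} = (−i)^j C(N,j) (√y)^j (√(1−y))^{N−j}`. -/
noncomputable def Upsilon (N : ℕ) (y : ℝ) : Matrix (Fin (N + 1)) (Fin (N + 1)) ℂ :=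
  Matrix.diagonal fun j =>
    (-Complex.I) ^ (j : ℕ) * (N.choose (j : ℕ) : ℂ)
      * (Real.sqrt y : ℂ) ^ (j : ℕ) * (Real.sqrt (1 - y) : ℂ) ^ (N - (j : ℕ))

/-!
Index the rows and columns by the monomials `x₀^(N-n) x₁^n` and let `Sym^N A` be the matrix of
the substitution `xᵢ ↦ Aᵢ₀ x₀ + Aᵢ₁ x₁` on binary forms of degree `N`; then
`Sym^N (A B) = Sym^N A · Sym^N B`. With `D = diag C(N,m)`, the generating function
`∑ₘ C(N,m) Kₘ(n) tᵐ = (1 - t)ⁿ (1 + t)^(N-n)` gives `K = Sym^N [[1,1],[1,-1]] · D⁻¹`, and directly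
from the definitions `Υ(y) = D · Sym^N diag(√(1-y), -i√y)` and
`Ψ₀(y) = Sym^N [[ζ̄,ζ],[ζ,ζ̄]] · D⁻¹`. The theorem thus reduces to the `2 × 2` identity
`[[1,1],[1,-1]] · diag(√(1-y), -i√y) · [[1,1],[1,-1]] = [[ζ̄,ζ],[ζ,ζ̄]]`,
which holds because `ζ⁻¹ = ζ̄` on `[0,1]`.
-/

section SymPow

variable {R : Type*} [CommRing R]

noncomputable def linForm (v : Fin 2 → R) : R[X] := C (v 1) * X + C (v 0)

lemma natDegree_linForm_pow_mul_le (v : Fin 2 → R) {d : ℕ} (i : ℕ) {F : R[X]}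
    (hF : F.natDegree ≤ d) : (linForm v ^ i * F).natDegree ≤ i + d :=
  natDegree_mul_le.trans <| add_le_add
    ((natDegree_pow_le_of_le i natDegree_linear_le).trans (mul_one i).le) hF

lemma linForm_vecMul (v : Fin 2 → R) (B : Matrix (Fin 2) (Fin 2) R) :
    linForm (v ᵥ* B) = v 1 • linForm (B 1) + v 0 • linForm (B 0) := by
  simp only [linForm, vecMul, dotProduct, Fin.sum_univ_two, ← C_mul', map_add, map_mul]
  ring

/-- `F`, read as a binary form of degree `d` in `x₀ = 1` and `x₁ = X`, with each `xᵢ` replaced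
by `linForm (B i)`. -/
noncomputable def homogSubst (B : Matrix (Fin 2) (Fin 2) R) (d : ℕ) : R[X] →ₗ[R] R[X] :=
  ∑ k ∈ Finset.range (d + 1),
    (lcoeff R k).smulRight (linForm (B 1) ^ k * linForm (B 0) ^ (d - k))

lemma homogSubst_apply (B : Matrix (Fin 2) (Fin 2) R) (d : ℕ) (F : R[X]) :
    homogSubst B d F =
      ∑ k ∈ Finset.range (d + 1), F.coeff k • (linForm (B 1) ^ k * linForm (B 0) ^ (d - k)) := by
  simp [homogSubst]

lemma homogSubst_succ (B : Matrix (Fin 2) (Fin 2) R) {d : ℕ} {F : R[X]}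
    (hF : F.natDegree ≤ d) : homogSubst B (d + 1) F = linForm (B 0) * homogSubst B d F := by
  rw [homogSubst_apply, homogSubst_apply, Finset.sum_range_succ,
    coeff_eq_zero_of_natDegree_lt (Nat.lt_succ_of_le hF), zero_smul, add_zero, Finset.mul_sum]
  refine Finset.sum_congr rfl fun k hk => ?_
  rw [Nat.sub_add_comm (Nat.lt_succ_iff.mp (Finset.mem_range.mp hk)), pow_succ, mul_smul_comm]
  ring_nf

lemma homogSubst_succ_X_mul (B : Matrix (Fin 2) (Fin 2) R) (d : ℕ) (F : R[X]) :
    homogSubst B (d + 1) (X * F) = linForm (B 1) * homogSubst B d F := by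
  rw [homogSubst_apply, homogSubst_apply, Finset.sum_range_succ', coeff_X_mul_zero, zero_smul,
    add_zero, Finset.mul_sum]
  refine Finset.sum_congr rfl fun k _ => ?_
  rw [coeff_X_mul, Nat.add_sub_add_right, pow_succ, mul_smul_comm]
  ring_nf

lemma homogSubst_linForm_mul (B : Matrix (Fin 2) (Fin 2) R) (v : Fin 2 → R) {d : ℕ}
    {F : R[X]} (hF : F.natDegree ≤ d) :
    homogSubst B (d + 1) (linForm v * F) = linForm (v ᵥ* B) * homogSubst B d F := by
  have hsplit : linForm v * F = v 1 • (X * F) + v 0 • F := by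
    simp only [linForm, ← C_mul']
    ring
  rw [hsplit, map_add, map_smul, map_smul, homogSubst_succ_X_mul, homogSubst_succ B hF,
    linForm_vecMul, add_mul, smul_mul_assoc, smul_mul_assoc]

lemma homogSubst_linForm_pow_mul (B : Matrix (Fin 2) (Fin 2) R) (v : Fin 2 → R) {d : ℕ}
    {F : R[X]} (hF : F.natDegree ≤ d) (i : ℕ) :
    homogSubst B (i + d) (linForm v ^ i * F) = linForm (v ᵥ* B) ^ i * homogSubst B d F := by
  induction i with
  | zero => simp
  | succ i ih =>
    rw [Nat.add_right_comm, pow_succ', mul_assoc,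
      homogSubst_linForm_mul B v (natDegree_linForm_pow_mul_le v i hF), ih, pow_succ', mul_assoc]

lemma homogSubst_zero_one (B : Matrix (Fin 2) (Fin 2) R) : homogSubst B 0 1 = 1 := by
  simp [homogSubst_apply]

/-- `linForm (A i)` is the image of `xᵢ` under `xᵢ ↦ Aᵢ₀ x₀ + Aᵢ₁ x₁`, dehomogenised at `x₀ = 1`,
so row `n` lists the coefficients of the image of `x₀^(N-n) x₁^n`. -/
noncomputable def symPow (N : ℕ) (A : Matrix (Fin 2) (Fin 2) R) :
    Matrix (Fin (N + 1)) (Fin (N + 1)) R :=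
  of fun n m => (linForm (A 1) ^ (n : ℕ) * linForm (A 0) ^ (N - n)).coeff m

lemma homogSubst_linForm_pow_mul_pow (B : Matrix (Fin 2) (Fin 2) R) (v w : Fin 2 → R)
    {N n : ℕ} (hn : n ≤ N) :
    homogSubst B N (linForm v ^ n * linForm w ^ (N - n)) =
      linForm (v ᵥ* B) ^ n * linForm (w ᵥ* B) ^ (N - n) := by
  have hone : (1 : R[X]).natDegree ≤ 0 := natDegree_one.le
  have hw := homogSubst_linForm_pow_mul B w hone (N - n)
  have hv := homogSubst_linForm_pow_mul B v (natDegree_linForm_pow_mul_le w (N - n) hone) n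
  rw [Nat.add_zero, mul_one, homogSubst_zero_one, mul_one] at hw
  rw [Nat.add_zero, Nat.add_sub_cancel' hn, mul_one, hw] at hv
  exact hv

theorem symPow_mul (N : ℕ) (A B : Matrix (Fin 2) (Fin 2) R) :
    symPow N (A * B) = symPow N A * symPow N B := by
  ext n m
  rw [mul_apply, symPow, of_apply, mul_apply_eq_vecMul, mul_apply_eq_vecMul,
    ← homogSubst_linForm_pow_mul_pow B _ _ (Nat.lt_succ_iff.mp n.isLt), homogSubst_apply,
    finsetSum_coeff, ← Fin.sum_univ_eq_sum_range]
  simp [symPow]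

lemma linForm_pow (v : Fin 2 → R) (n : ℕ) :
    linForm v ^ n =
      ∑ k ∈ Finset.range (n + 1), monomial k ((n.choose k : R) * v 1 ^ k * v 0 ^ (n - k)) := by
  rw [linForm, add_pow]
  refine Finset.sum_congr rfl fun k _ => ?_
  rw [mul_pow, ← C_pow, ← C_pow, ← C_eq_natCast, mul_comm (C _) (X ^ k), mul_assoc, mul_assoc,
    ← map_mul, ← map_mul, X_pow_mul_C, C_mul_X_pow_eq_monomial]
  ring_nf

lemma symPow_apply (N : ℕ) (A : Matrix (Fin 2) (Fin 2) R) (n m : Fin (N + 1)) :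
    symPow N A n m =
      ∑ p ∈ Finset.range ((n : ℕ) + 1), ∑ q ∈ Finset.range (N - n + 1),
        if p + q = (m : ℕ) then
          ((n : ℕ).choose p : R) * ((N - n).choose q : R) * (A 1 1 ^ p * A 1 0 ^ ((n : ℕ) - p))
            * (A 0 1 ^ q * A 0 0 ^ (N - n - q))
        else 0 := by
  rw [symPow, of_apply, linForm_pow, linForm_pow, Finset.sum_mul_sum, finsetSum_coeff]
  refine Finset.sum_congr rfl fun p _ => ?_
  rw [finsetSum_coeff]
  refine Finset.sum_congr rfl fun q _ => ?_
  rw [monomial_mul_monomial, coeff_monomial]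
  split_ifs <;> ring

lemma symPow_diagonal (N : ℕ) (d : Fin 2 → R) :
    symPow N (diagonal d) = diagonal fun n : Fin (N + 1) => d 1 ^ (n : ℕ) * d 0 ^ (N - n) := by
  ext n m
  have h1 : linForm (diagonal d 1) = C (d 1) * X := by simp [linForm]
  have h0 : linForm (diagonal d 0) = C (d 0) := by simp [linForm]
  rw [symPow, of_apply, h1, h0, mul_pow, ← C_pow, ← C_pow, mul_right_comm, ← map_mul,
    coeff_C_mul_X_pow, diagonal_apply]
  simp only [Fin.ext_iff, eq_comm]

end SymPow

lemma choose_mul_kraw_summand {N m s : ℕ} (n : ℕ) (hs : s ≤ m) (hm : m ≤ N) :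
    (N.choose m : ℂ) * ((ascPochhammer ℂ s).eval (-(m : ℂ)) * (ascPochhammer ℂ s).eval (-(n : ℂ))
        / ((ascPochhammer ℂ s).eval (-(N : ℂ)) * (s.factorial : ℂ)) * 2 ^ s) =
      (n.choose s : ℂ) * (-2) ^ s * ((N - s).choose (m - s) : ℂ) := by
  simp only [ascPochhammer_eval_neg_eq_descPochhammer, descPochhammer_eval_eq_descFactorial,
    Nat.descFactorial_eq_factorial_mul_choose]
  have hchoose : (N.choose m : ℂ) * (m.choose s : ℂ) =
      (N.choose s : ℂ) * ((N - s).choose (m - s) : ℂ) := by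
    exact_mod_cast Nat.choose_mul hs
  have hNs : (N.choose s : ℂ) ≠ 0 := Nat.cast_ne_zero.mpr (Nat.choose_pos (hs.trans hm)).ne'
  have hfact : (s.factorial : ℂ) ≠ 0 := Nat.cast_ne_zero.mpr s.factorial_ne_zero
  have hneg : ((-1 : ℂ)) ^ s ≠ 0 := pow_ne_zero _ (by norm_num)
  push_cast
  field_simp
  linear_combination ((-1 : ℂ) ^ s * (n.choose s : ℂ) * 2 ^ s) * hchoose
    - ((n.choose s : ℂ) * (N.choose s : ℂ) * ((N - s).choose (m - s) : ℂ)) * (neg_pow (2 : ℂ) s)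

theorem choose_mul_kraw_eq_coeff {N n m : ℕ} (hn : n ≤ N) (hm : m ≤ N) :
    (N.choose m : ℂ) * kraw N m n = ((1 - X : ℂ[X]) ^ n * (1 + X) ^ (N - n)).coeff m := by
  set f : ℕ → ℂ := fun s =>
    (n.choose s : ℂ) * (-2) ^ s * if s ≤ m then ((N - s).choose (m - s) : ℂ) else 0
  have hkraw : (N.choose m : ℂ) * kraw N m n = ∑ s ∈ Finset.range (N + 1), f s := by
    rw [kraw, Finset.mul_sum, ← Finset.sum_subset (f := f)
      (Finset.range_subset_range.mpr (by omega : m + 1 ≤ N + 1))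
      (fun s _ hs => by simp_all [f])]
    refine Finset.sum_congr rfl fun s hs => ?_
    have hsm := Nat.lt_succ_iff.mp (Finset.mem_range.mp hs)
    simp only [choose_mul_kraw_summand n hsm hm, f, if_pos hsm]
  have hexpand : (1 - X : ℂ[X]) ^ n * (1 + X) ^ (N - n) =
      ∑ s ∈ Finset.range (n + 1), C ((n.choose s : ℂ) * (-2) ^ s) * X ^ s * (1 + X) ^ (N - s) := by
    rw [show (1 - X : ℂ[X]) = C (-2) * X + (1 + X) by rw [map_neg, map_ofNat]; ring, add_pow,
      Finset.sum_mul]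
    refine Finset.sum_congr rfl fun s hs => ?_
    rw [show N - s = (n - s) + (N - n) by have := Finset.mem_range.mp hs; omega, pow_add,
      mul_pow, ← C_pow, ← C_eq_natCast, map_mul]
    ring
  rw [hkraw, hexpand, finsetSum_coeff, ← Finset.sum_subset
    (Finset.range_subset_range.mpr (by omega : n + 1 ≤ N + 1))
    (fun s _ hs => by simp_all [f, Nat.choose_eq_zero_of_lt])]
  refine Finset.sum_congr rfl fun s _ => ?_
  rw [mul_assoc, coeff_C_mul, coeff_X_pow_mul', coeff_one_add_X_pow]

lemma natCast_choose_ne_zero {N : ℕ} (m : Fin (N + 1)) : (N.choose m : ℂ) ≠ 0 :=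
  Nat.cast_ne_zero.mpr (Nat.choose_pos (Nat.lt_succ_iff.mp m.isLt)).ne'

lemma Kmat_eq_symPow (N : ℕ) :
    Kmat N = symPow N !![1, 1; 1, -1] * diagonal fun m : Fin (N + 1) => (N.choose m : ℂ)⁻¹ := by
  ext n m
  have hpoly : linForm (!![1, 1; 1, -1] 1) ^ (n : ℕ) * linForm (!![1, 1; 1, -1] 0) ^ (N - n) =
      (1 - X : ℂ[X]) ^ (n : ℕ) * (1 + X) ^ (N - n) := by
    simp only [linForm, of_apply, cons_val', cons_val_zero, cons_val_one, map_neg, map_one]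
    ring
  rw [mul_diagonal, symPow, of_apply, hpoly,
    ← choose_mul_kraw_eq_coeff (Nat.lt_succ_iff.mp n.isLt) (Nat.lt_succ_iff.mp m.isLt),
    mul_comm, ← mul_assoc, inv_mul_cancel₀ (natCast_choose_ne_zero m), one_mul]
  rfl

lemma Upsilon_eq_symPow (N : ℕ) (y : ℝ) :
    Upsilon N y = (diagonal fun m : Fin (N + 1) => (N.choose m : ℂ)) *
      symPow N (diagonal ![(Real.sqrt (1 - y) : ℂ), -(Complex.I * Real.sqrt y)]) := by
  rw [symPow_diagonal, diagonal_mul_diagonal, Upsilon]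
  congr 1
  funext j
  simp only [cons_val_one, cons_val_zero, neg_pow (Complex.I * _), mul_pow]
  ring

lemma zeta_ne_zero (y : ℝ) : zeta y ≠ 0 := by
  intro h
  have hre : Real.sqrt (1 - y) = 0 := by simpa [zeta] using congrArg Complex.re h
  have him : Real.sqrt y = 0 := by simpa [zeta] using congrArg Complex.im h
  rw [Real.sqrt_eq_zero'] at hre him
  linarith

lemma zeta_inv {y : ℝ} (hy : y ∈ Icc (0 : ℝ) 1) :
    (zeta y)⁻¹ = (Real.sqrt (1 - y) : ℂ) - Complex.I * Real.sqrt y := by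
  refine inv_eq_of_mul_eq_one_right ?_
  have hs : ((Real.sqrt (1 - y) : ℂ)) ^ 2 = 1 - y := by
    rw [← Complex.ofReal_pow, Real.sq_sqrt (by linarith [hy.2]), Complex.ofReal_sub,
      Complex.ofReal_one]
  have ht : ((Real.sqrt y : ℂ)) ^ 2 = y := by
    rw [← Complex.ofReal_pow, Real.sq_sqrt hy.1]
  rw [zeta]
  linear_combination hs + ht - (Real.sqrt y : ℂ) ^ 2 * Complex.I_sq

lemma Psi0_eq_symPow (N : ℕ) (y : ℝ) :
    Psi0 N y = symPow N !![(zeta y)⁻¹, zeta y; zeta y, (zeta y)⁻¹] *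
      diagonal fun m : Fin (N + 1) => (N.choose m : ℂ)⁻¹ := by
  ext n m
  rw [mul_diagonal, symPow_apply, Psi0, of_apply, Nat.choose_symm (Nat.lt_succ_iff.mp m.isLt),
    mul_comm]
  congr 1
  refine Finset.sum_congr rfl fun p hp => Finset.sum_congr rfl fun q hq => ?_
  simp only [of_apply, cons_val', cons_val_zero, cons_val_one, empty_val', cons_val_fin_one]
  have hp' := Nat.lt_succ_iff.mp (Finset.mem_range.mp hp)
  have hq' := Nat.lt_succ_iff.mp (Finset.mem_range.mp hq)
  have hn := Nat.lt_succ_iff.mp n.isLt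
  have hexp : (zeta y)⁻¹ ^ p * zeta y ^ ((n : ℕ) - p) * (zeta y ^ q * (zeta y)⁻¹ ^ (N - n - q)) =
      zeta y ^ (2 * ((q : ℤ) - p + (n : ℕ)) - N) := by
    simp only [← zpow_natCast, _root_.inv_zpow', ← zpow_add₀ (zeta_ne_zero y)]
    congr 1
    omega
  split_ifs
  · rw [← hexp]
    ring
  · rfl

/-- Theorem 3.2 of the paper: `Ψ₀(y) = K Υ(y) K` for all `y ∈ (0,1)`. -/
theorem stmt9 (N : ℕ) :
    ∀ y ∈ Set.Ioo (0:ℝ) 1, Psi0 N y = Kmat N * Upsilon N y * Kmat N := by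
  intro y hy
  have hconj : !![1, 1; 1, -1] *
      diagonal ![(Real.sqrt (1 - y) : ℂ), -(Complex.I * Real.sqrt y)] * !![1, 1; 1, -1] =
      !![(zeta y)⁻¹, zeta y; zeta y, (zeta y)⁻¹] := by
    rw [zeta_inv (Ioo_subset_Icc_self hy), zeta]
    ext i j
    fin_cases i <;> fin_cases j <;> simp [mul_apply, Fin.sum_univ_two, vecMul, dotProduct] <;> ring
  have hdiag : (diagonal fun m : Fin (N + 1) => (N.choose m : ℂ)⁻¹) *
      diagonal (fun m : Fin (N + 1) => (N.choose m : ℂ)) = 1 := by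
    rw [diagonal_mul_diagonal, ← diagonal_one]
    exact congrArg diagonal (funext fun m => inv_mul_cancel₀ (natCast_choose_ne_zero m))
  rw [Psi0_eq_symPow, Kmat_eq_symPow, Upsilon_eq_symPow, ← hconj, symPow_mul, symPow_mul]
  simp only [Matrix.mul_assoc]
  rw [← Matrix.mul_assoc (diagonal _) (diagonal _), hdiag, Matrix.one_mul]
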